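/- Assume λ₁ > μ₁ and the coexistence condition. Let n : [0,∞) → ℝ⁴ be differentiable with n'(t) = F(n(t)) for all t ≥ 0 and n(0) ∈ (0,∞)⁴. Then for each coordinate j ∈ {1a, 1d, 1i, 2} one has liminf_{t→∞} n_j(t) > 0 (uniform strong persistence). -/

import Mathlib

/-!
Solutions stay positive by a first-exit argument, and they are bounded because the logistic term
keeps the total host population `n₁ₐ + n₁d + n₁ᵢ` below `max (its initial value) n̄₁ₐ`, which in
turn bounds `n₂`.

The active hosts and the infection `n₁ᵢ + b n₂`, `b = (r + v) / (m v)`, persist by the same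
delayed-repulsion principle: a quantity that decays at most exponentially, and that starts to grow
once it has stayed small for a fixed time, stays bounded away from zero. If the active hosts stay
small, the infection decays, then the dormant hosts decay, and the logistic growth of `n₁ₐ` takes
over. If the infection stays small, the dormant hosts decay and the active hosts recover to a level
just below `n̄₁ₐ`; by the coexistence condition the infection grows there. Lower bounds for `n₁ᵢ`,
`n₂` and `n₁d` then follow in turn from linear differential inequalities `f' ≥ a - k f`.
-/

open Filter

/-- The host–virus vector field in coordinates `(n₁ₐ, n₁d, n₁ᵢ, n₂)`. -/
noncomputable def hostVirusField (lam mu C D q kap sig r v mu2 m : ℝ)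
    (n : Fin 4 → ℝ) : Fin 4 → ℝ :=
  ![n 0 * (lam - mu - C * (n 0 + n 1 + n 2) - D * n 3) + sig * n 1 + r * n 2,
    q * D * n 0 * n 3 - (kap * mu + sig) * n 1,
    (1 - q) * D * n 0 * n 3 - (r + v) * n 2,
    m * v * n 2 - (1 - q) * D * n 0 * n 3 - mu2 * n 3]

open Set Topology Real

section ScalarComparison

variable {f f' : ℝ → ℝ} {a b : ℝ}

theorem le_gronwallBound_of_hasDerivAt {δ K ε : ℝ} (hab : a ≤ b)
    (hf : ∀ t ∈ Icc a b, HasDerivAt f (f' t) t) (ha : f a ≤ δ)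
    (bound : ∀ t ∈ Ico a b, f' t ≤ K * f t + ε) :
    f b ≤ gronwallBound δ K ε (b - a) :=
  le_gronwallBound_of_liminf_deriv_right_le
    (fun t ht => (hf t ht).continuousAt.continuousWithinAt)
    (fun t ht _ hr => (hf t (Ico_subset_Icc_self ht)).hasDerivWithinAt.liminf_right_slope_le hr)
    ha bound b (right_mem_Icc.2 hab)

theorem mul_exp_le_of_neg_mul_le_deriv {K : ℝ} (hab : a ≤ b)
    (hf : ∀ t ∈ Icc a b, HasDerivAt f (f' t) t) (bound : ∀ t ∈ Ico a b, -K * f t ≤ f' t) :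
    f a * exp (-(K * (b - a))) ≤ f b := by
  have h := le_gronwallBound_of_hasDerivAt (f := -f) (f' := -f') (K := -K) (ε := 0) hab
    (fun t ht => (hf t ht).neg) le_rfl fun t ht => by
      simp only [Pi.neg_apply]; linarith [bound t ht]
  rw [gronwallBound_ε0] at h
  simp only [Pi.neg_apply, neg_mul] at h
  linarith

theorem le_div_add_mul_exp_of_deriv_le {α c : ℝ} (hα : 0 < α) (hab : a ≤ b)
    (hf : ∀ t ∈ Icc a b, HasDerivAt f (f' t) t) (bound : ∀ t ∈ Ico a b, f' t ≤ -α * f t + c) :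
    f b ≤ c / α + (f a - c / α) * exp (-(α * (b - a))) := by
  have h := le_gronwallBound_of_hasDerivAt hab hf le_rfl bound
  rw [gronwallBound_of_K_ne_0 (neg_ne_zero.2 hα.ne')] at h
  rw [div_neg] at h
  simp only [neg_mul] at h
  linarith

theorem exists_settling_time {α c : ℝ} (hα : 0 < α) (hc : 0 ≤ c) (B : ℝ) {ε : ℝ} (hε : 0 < ε) :
    ∃ L, 0 ≤ L ∧ ∀ {f f' : ℝ → ℝ} {a b : ℝ}, a + L ≤ b →
      (∀ t ∈ Icc a b, HasDerivAt f (f' t) t) → f a ≤ B →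
      (∀ t ∈ Ico a b, f' t ≤ -α * f t + c) → f b ≤ c / α + ε := by
  have hdecay : Tendsto (fun τ => B * exp (-(α * τ))) atTop (𝓝 0) := by
    simpa using (tendsto_exp_neg_atTop_nhds_zero.comp
      (tendsto_id.const_mul_atTop hα)).const_mul B
  obtain ⟨L, hL⟩ := eventually_atTop.1 (hdecay.eventually (ge_mem_nhds hε))
  refine ⟨max L 0, le_max_right _ _, fun {f f' a b} hb hf ha bound => ?_⟩
  have hab : a ≤ b := by linarith [le_max_right L 0]
  have hexp := le_div_add_mul_exp_of_deriv_le hα hab hf bound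
  have hsmall := hL (b - a) (by linarith [le_max_left L 0])
  have hca : 0 ≤ c / α := div_nonneg hc hα.le
  have : (f a - c / α) * exp (-(α * (b - a))) ≤ B * exp (-(α * (b - a))) :=
    mul_le_mul_of_nonneg_right (by linarith) (exp_pos _).le
  linarith

theorem exists_last_ge {m : ℝ} (hab : a ≤ b) (hf : ContinuousOn f (Icc a b)) (ha : m ≤ f a) :
    ∃ s ∈ Icc a b, m ≤ f s ∧ ∀ u ∈ Ioc s b, f u < m := by
  set S := Icc a b ∩ f ⁻¹' Ici m
  have hS : IsClosed S := hf.preimage_isClosed_of_isClosed isClosed_Icc isClosed_Ici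
  have hne : S.Nonempty := ⟨a, left_mem_Icc.2 hab, ha⟩
  have hbdd : BddAbove S := ⟨b, fun u hu => hu.1.2⟩
  obtain ⟨hs, hfs⟩ := hS.csSup_mem hne hbdd
  refine ⟨sSup S, hs, hfs, fun u hu => lt_of_not_ge fun hmu => ?_⟩
  exact hu.1.not_ge (le_csSup hbdd ⟨⟨hs.1.trans hu.1.le, hu.2⟩, hmu⟩)

theorem le_of_deriv_nonneg (hab : a ≤ b) (hf : ∀ t ∈ Icc a b, HasDerivAt f (f' t) t)
    (h : ∀ t ∈ Ioo a b, 0 ≤ f' t) : f a ≤ f b := by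
  refine monotoneOn_of_hasDerivWithinAt_nonneg (f' := f') (convex_Icc a b)
    (fun t ht => (hf t ht).continuousAt.continuousWithinAt) (fun t ht => ?_) (fun t ht => ?_)
    (left_mem_Icc.2 hab) (right_mem_Icc.2 hab) hab
  · rw [interior_Icc] at ht ⊢
    exact (hf t (Ioo_subset_Icc_self ht)).hasDerivWithinAt
  · rw [interior_Icc] at ht
    exact h t ht

theorem le_max_of_deriv_nonpos {R : ℝ} (hab : a ≤ b) (hf : ∀ t ∈ Icc a b, HasDerivAt f (f' t) t)
    (h : ∀ t ∈ Ioo a b, R ≤ f t → f' t ≤ 0) : f b ≤ max (f a) R := by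
  obtain ⟨s, hs, hfs, hafter⟩ := exists_last_ge (f := -f) (m := -max (f a) R) hab
    (fun t ht => (hf t ht).continuousAt.neg.continuousWithinAt) (by simp)
  have hfs : f s ≤ max (f a) R := by simpa using hfs
  have hdesc : -f s ≤ -f b := le_of_deriv_nonneg (f := -f) (f' := -f') hs.2
    (fun t ht => (hf t ⟨hs.1.trans ht.1, ht.2⟩).neg) fun t ht => by
      have hR : R ≤ f t := by
        have := hafter t ⟨ht.1, ht.2.le⟩
        simp only [Pi.neg_apply, neg_lt_neg_iff] at this
        exact (le_max_right _ _).trans this.le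
      simpa using h t ⟨hs.1.trans_lt ht.1, ht.2⟩ hR
  linarith

theorem le_of_deriv_ge_while_le {c ℓ : ℝ} (hc : 0 ≤ c) (hab : a ≤ b)
    (hf : ∀ t ∈ Icc a b, HasDerivAt f (f' t) t) (hreach : ℓ ≤ f a + c * (b - a))
    (h : ∀ t ∈ Icc a b, f t ≤ ℓ → c ≤ f' t) : ℓ ≤ f b := by
  by_cases hex : ∃ s ∈ Icc a b, ℓ ≤ f s
  · obtain ⟨s, hs, hfs⟩ := hex
    have := le_max_of_deriv_nonpos (f := -f) (f' := -f') (R := -ℓ) hs.2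
      (fun t ht => (hf t ⟨hs.1.trans ht.1, ht.2⟩).neg) fun t ht hft => by
        have := h t ⟨hs.1.trans ht.1.le, ht.2.le⟩ (by simpa using hft)
        simp only [Pi.neg_apply]; linarith
    simp only [Pi.neg_apply, max_neg_neg, neg_le_neg_iff] at this
    exact (le_min hfs le_rfl).trans this
  · simp only [not_exists, not_and, not_le] at hex
    have := le_of_deriv_nonneg (f := fun t => f t - c * t) (f' := fun t => f' t - c) hab
      (fun t ht => (hf t ht).sub ((hasDerivAt_id t).const_mul c |>.congr_deriv (mul_one c)))
      fun t ht => sub_nonneg.2 (h t (Ioo_subset_Icc_self ht) (hex t (Ioo_subset_Icc_self ht)).le)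
    linarith

theorem eventually_ge_of_sub_mul_le_deriv {k α : ℝ} (hk : 0 < k) (hα : 0 < α)
    (hf : ∀ᶠ t in atTop, HasDerivAt f (f' t) t) (hnn : ∀ᶠ t in atTop, 0 ≤ f t)
    (h : ∀ᶠ t in atTop, α - k * f t ≤ f' t) : ∀ᶠ t in atTop, α / (2 * k) ≤ f t := by
  obtain ⟨T, hT⟩ := eventually_atTop.1 (hf.and (hnn.and h))
  filter_upwards [eventually_ge_atTop (T + 1 / k)] with t ht
  have hTt : T ≤ t := by linarith [one_div_pos.2 hk]
  refine le_of_deriv_ge_while_le (c := α / 2) (by positivity) hTt (fun u hu => (hT u hu.1).1) ?_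
    fun u hu hfu => ?_
  · have : α / (2 * k) ≤ α / 2 * (t - T) := calc
      α / (2 * k) = α / 2 * (1 / k) := by ring
      _ ≤ α / 2 * (t - T) := by gcongr; linarith
    linarith [(hT T le_rfl).2.1]
  · have : k * f u ≤ α / 2 := calc
      k * f u ≤ k * (α / (2 * k)) := by gcongr
      _ = α / 2 := by field_simp
    linarith [(hT u hu.1).2.2]

theorem exists_pos_forall_le_of_delayed_repulsion {T δ K L : ℝ} (hδ : 0 < δ) (hK : 0 ≤ K)
    (hL : 0 ≤ L) (hf : ∀ t, T ≤ t → HasDerivAt f (f' t) t) (hfT : 0 < f T)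
    (hlow : ∀ t, T ≤ t → -K * f t ≤ f' t)
    (hrep : ∀ s t, T ≤ s → s + L ≤ t → (∀ u ∈ Icc s t, f u ≤ δ) → 0 ≤ f' t) :
    ∃ c > 0, ∀ t, T ≤ t → c ≤ f t := by
  -- After the last time `s ≤ t` with `f s ≥ μ`, `f` loses at most a factor `exp (-(K L))` on
  -- `[s, s + L]` and cannot decrease afterwards.
  set μ := min (f T) δ
  have hμ : 0 < μ := lt_min hfT hδ
  refine ⟨μ * exp (-(K * L)), by positivity, fun t hTt => ?_⟩
  obtain ⟨s, hs, hfs, hafter⟩ := exists_last_ge (m := μ) hTt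
    (fun u hu => (hf u hu.1).continuousAt.continuousWithinAt) (min_le_left _ _)
  rcases hs.2.eq_or_lt with rfl | hst
  · exact le_trans (mul_le_of_le_one_right hμ.le (exp_le_one_iff.2 (by nlinarith))) hfs
  have hsμ : f s ≤ μ := by
    refine le_of_tendsto (hf s hs.1).continuousAt.continuousWithinAt (f := f) (x := 𝓝[>] s) ?_
    filter_upwards [Ioo_mem_nhdsGT hst] with u hu using (hafter u ⟨hu.1, hu.2.le⟩).le
  have hbelow : ∀ u ∈ Icc s t, f u ≤ δ := fun u hu =>
    (hu.1.eq_or_lt.elim (fun h => h ▸ hsμ) fun h => (hafter u ⟨h, hu.2⟩).le).trans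
      (min_le_right _ _)
  set t' := min t (s + L)
  have hst' : s ≤ t' := le_min hs.2 (by linarith)
  have hdecay := mul_exp_le_of_neg_mul_le_deriv (f := f) (f' := f') (K := K) hst'
    (fun u hu => hf u (hs.1.trans hu.1)) fun u hu => hlow u (hs.1.trans hu.1)
  have hgrow : f t' ≤ f t := le_of_deriv_nonneg (min_le_left _ _)
    (fun u hu => hf u (hs.1.trans (hst'.trans hu.1))) fun u hu => by
      have hu' : s + L ≤ u := by
        rcases min_lt_iff.1 hu.1 with h | h
        · exact absurd hu.2 (not_lt.2 h.le)
        · exact h.le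
      exact hrep s u hs.1 hu' fun w hw => hbelow w ⟨hw.1, hw.2.trans hu.2.le⟩
  have hexp : exp (-(K * L)) ≤ exp (-(K * (t' - s))) :=
    exp_le_exp.2 (neg_le_neg (mul_le_mul_of_nonneg_left (by linarith [min_le_right t (s + L)]) hK))
  calc μ * exp (-(K * L)) ≤ f s * exp (-(K * (t' - s))) :=
        mul_le_mul hfs hexp (exp_pos _).le (hμ.le.trans hfs)
    _ ≤ f t := hdecay.trans hgrow

end ScalarComparison

theorem forall_pos_of_pos_at_first_exit {ι : Type*} [Finite ι] {g : ℝ → ι → ℝ} {a : ℝ}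
    (hg : ∀ i, ContinuousOn (fun t => g t i) (Ici a)) (ha : ∀ i, 0 < g a i)
    (hexit : ∀ T, a < T → (∀ t ∈ Ico a T, ∀ i, 0 < g t i) → ∀ i, 0 < g T i) :
    ∀ t, a ≤ t → ∀ i, 0 < g t i := by
  by_contra! hneg
  set S := ⋃ i, Ici a ∩ (fun t => g t i) ⁻¹' Iic 0
  have hS : IsClosed S := isClosed_iUnion_of_finite fun i =>
    (hg i).preimage_isClosed_of_isClosed isClosed_Ici isClosed_Iic
  obtain ⟨t₀, ht₀, i₀, hi₀⟩ := hneg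
  have hne : S.Nonempty := ⟨t₀, mem_iUnion.2 ⟨i₀, ht₀, hi₀⟩⟩
  have hbdd : BddBelow S := ⟨a, fun u hu => by obtain ⟨i, hu, -⟩ := mem_iUnion.1 hu; exact hu⟩
  obtain ⟨i, haT, hTi⟩ := mem_iUnion.1 (hS.csInf_mem hne hbdd)
  have hbefore : ∀ t ∈ Ico a (sInf S), ∀ i, 0 < g t i := fun t ht i =>
    lt_of_not_ge fun h => ht.2.not_ge (csInf_le hbdd (mem_iUnion.2 ⟨i, ht.1, h⟩))
  have haT' : a < sInf S := (mem_Ici.1 haT).lt_of_ne fun h => (ha i).not_ge (h ▸ hTi)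
  exact (hexit _ haT' hbefore i).not_ge hTi

theorem liminf_pos_of_eventually_ge {α : Type*} {l : Filter α} [l.NeBot] {u : α → ℝ} {c B : ℝ}
    (hc : 0 < c) (hbdd : ∀ᶠ x in l, u x ≤ B) (h : ∀ᶠ x in l, c ≤ u x) : 0 < liminf u l :=
  hc.trans_le (le_liminf_of_le (isBoundedUnder_of_eventually_le hbdd).isCoboundedUnder_ge h)

namespace HostVirus

variable {lam mu C D q kap sig r v mu2 m : ℝ}

local notation "𝔽" => hostVirusField lam mu C D q kap sig r v mu2 m

section Components

variable (p : Fin 4 → ℝ)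

@[simp] theorem hostVirusField_active :
    𝔽 p 0 = p 0 * (lam - mu - C * (p 0 + p 1 + p 2) - D * p 3) + sig * p 1 + r * p 2 := rfl

@[simp] theorem hostVirusField_dormant : 𝔽 p 1 = q * D * p 0 * p 3 - (kap * mu + sig) * p 1 := rfl

@[simp] theorem hostVirusField_infected : 𝔽 p 2 = (1 - q) * D * p 0 * p 3 - (r + v) * p 2 := rfl

@[simp] theorem hostVirusField_virus :
    𝔽 p 3 = m * v * p 2 - (1 - q) * D * p 0 * p 3 - mu2 * p 3 := rfl

end Components

theorem exists_neg_mul_le_hostVirusField (hlm : mu ≤ lam) (hC : 0 ≤ C) (hD : 0 ≤ D)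
    (hq0 : 0 ≤ q) (hq1 : q ≤ 1) (hsig : 0 ≤ sig) (hr : 0 ≤ r) (hv : 0 ≤ v) (hm : 0 ≤ m) (M : ℝ) :
    ∃ K, 0 ≤ K ∧ ∀ p : Fin 4 → ℝ, (∀ i, 0 ≤ p i) → (∀ i, p i ≤ M) → ∀ i, -K * p i ≤ 𝔽 p i := by
  set K := max (max ((3 * C + D) * M) (kap * mu + sig)) (max (r + v) ((1 - q) * D * M + mu2))
  refine ⟨K, le_max_of_le_right (le_max_of_le_left (add_nonneg hr hv)), fun p h0 hM i => ?_⟩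
  have hK₀ : (3 * C + D) * M ≤ K := le_max_of_le_left (le_max_left _ _)
  have hK₁ : kap * mu + sig ≤ K := le_max_of_le_left (le_max_right _ _)
  have hK₂ : r + v ≤ K := le_max_of_le_right (le_max_left _ _)
  have hK₃ : (1 - q) * D * M + mu2 ≤ K := le_max_of_le_right (le_max_right _ _)
  have h1q : 0 ≤ 1 - q := sub_nonneg.2 hq1
  have hx := h0 0; have hy := h0 1; have hz := h0 2; have hw := h0 3
  have hxw : 0 ≤ D * p 0 * p 3 := by positivity
  fin_cases i <;> simp only [Fin.reduceFinMk, Fin.isValue, hostVirusField_active,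
    hostVirusField_dormant, hostVirusField_infected, hostVirusField_virus]
  · have : C * (p 0 + p 1 + p 2) + D * p 3 ≤ K := by
      nlinarith [mul_le_mul_of_nonneg_left (hM 0) hC, mul_le_mul_of_nonneg_left (hM 1) hC,
        mul_le_mul_of_nonneg_left (hM 2) hC, mul_le_mul_of_nonneg_left (hM 3) hD]
    nlinarith [mul_le_mul_of_nonneg_left this hx, mul_nonneg hx (sub_nonneg.2 hlm),
      mul_nonneg hsig hy, mul_nonneg hr hz]
  · nlinarith [mul_le_mul_of_nonneg_right hK₁ hy, mul_nonneg hq0 hxw]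
  · nlinarith [mul_le_mul_of_nonneg_right hK₂ hz, mul_nonneg h1q hxw]
  · have : (1 - q) * D * p 0 + mu2 ≤ K :=
      le_trans (by nlinarith [mul_le_mul_of_nonneg_left (hM 0) (mul_nonneg h1q hD)]) hK₃
    nlinarith [mul_le_mul_of_nonneg_right this hw, mul_nonneg (mul_nonneg hm hv) hz]

variable {n : ℝ → Fin 4 → ℝ}

theorem solution_pos (hlm : mu ≤ lam) (hC : 0 ≤ C) (hD : 0 ≤ D) (hq0 : 0 ≤ q) (hq1 : q ≤ 1)
    (hsig : 0 ≤ sig) (hr : 0 ≤ r) (hv : 0 ≤ v) (hm : 0 ≤ m)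
    (hn : ∀ t, 0 ≤ t → HasDerivAt n (𝔽 (n t)) t) (h0 : ∀ i, 0 < n 0 i) :
    ∀ t, 0 ≤ t → ∀ i, 0 < n t i := by
  refine forall_pos_of_pos_at_first_exit
    (fun i t ht => (hasDerivAt_pi.1 (hn t ht) i).continuousAt.continuousWithinAt) h0
    fun T hT hpos i => ?_
  obtain ⟨M, hM⟩ := isCompact_Icc.exists_bound_of_continuousOn (f := n) (s := Icc 0 T)
    fun t ht => (hn t ht.1).continuousAt.continuousWithinAt
  obtain ⟨K, -, hK⟩ := exists_neg_mul_le_hostVirusField hlm hC hD hq0 hq1 hsig hr hv hm M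
  have hdecay := mul_exp_le_of_neg_mul_le_deriv hT.le (fun t ht => hasDerivAt_pi.1 (hn t ht.1) i)
    fun t ht => hK (n t) (fun j => (hpos t ht j).le)
      (fun j => (le_abs_self _).trans ((norm_le_pi_norm (n t) j).trans
        (hM t (Ico_subset_Icc_self ht)))) i
  exact (mul_pos (h0 i) (exp_pos _)).trans_le hdecay

theorem exists_solution_bound (hC : 0 < C) (hD : 0 ≤ D) (hq1 : q ≤ 1) (hkap : 0 ≤ kap)
    (hmu : 0 ≤ mu) (hv : 0 ≤ v) (hmu2 : 0 < mu2) (hm : 0 ≤ m)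
    (hn : ∀ t, 0 ≤ t → HasDerivAt n (𝔽 (n t)) t) (hpos : ∀ t, 0 ≤ t → ∀ i, 0 < n t i) :
    ∃ B, ∀ t, 0 ≤ t → ∀ i, n t i ≤ B := by
  set B₁ := max (n 0 0 + n 0 1 + n 0 2) ((lam - mu) / C)
  have hhost : ∀ t, 0 ≤ t → n t 0 + n t 1 + n t 2 ≤ B₁ := fun t ht =>
    le_max_of_deriv_nonpos ht
      (fun u hu => ((hasDerivAt_pi.1 (hn u hu.1) 0).add (hasDerivAt_pi.1 (hn u hu.1) 1)).add
        (hasDerivAt_pi.1 (hn u hu.1) 2))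
      fun u hu hR => by
        have hu := hu.1.le
        have : lam - mu - C * (n u 0 + n u 1 + n u 2) ≤ 0 := by
          simp only [Pi.add_apply] at hR
          rw [div_le_iff₀ hC] at hR; linarith
        simp only [hostVirusField_active, hostVirusField_dormant, hostVirusField_infected]
        nlinarith [mul_nonpos_of_nonneg_of_nonpos (hpos u hu 0).le this,
          mul_nonneg (mul_nonneg hkap hmu) (hpos u hu 1).le, mul_nonneg hv (hpos u hu 2).le]
  set B₂ := max (n 0 3) (m * v * B₁ / mu2)
  have hvirus : ∀ t, 0 ≤ t → n t 3 ≤ B₂ := fun t ht =>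
    le_max_of_deriv_nonpos ht (fun u hu => hasDerivAt_pi.1 (hn u hu.1) 3) fun u hu hR => by
      have hu := hu.1.le
      have hz : n u 2 ≤ B₁ := by linarith [hhost u hu, hpos u hu 0, hpos u hu 1]
      rw [div_le_iff₀ hmu2] at hR
      simp only [hostVirusField_virus]
      have hxw : 0 ≤ (1 - q) * D * n u 0 * n u 3 := by
        have := sub_nonneg.2 hq1; have := hpos u hu 0; have := hpos u hu 3; positivity
      nlinarith [mul_le_mul_of_nonneg_left hz (mul_nonneg hm hv)]
  refine ⟨max B₁ B₂, fun t ht i => ?_⟩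
  have := hhost t ht; have := hpos t ht 0; have := hpos t ht 1; have := hpos t ht 2
  fin_cases i
  · exact le_max_of_le_left (by simp only [Fin.zero_eta, Fin.isValue]; linarith)
  · exact le_max_of_le_left (by simp only [Fin.mk_one, Fin.isValue]; linarith)
  · exact le_max_of_le_left (by simp only [Fin.reduceFinMk, Fin.isValue]; linarith)
  · exact le_max_of_le_right (hvirus t ht)

theorem mul_le_hostVirusField_active (hsig : 0 ≤ sig) (hr : 0 ≤ r) {p : Fin 4 → ℝ}
    (hp : ∀ i, 0 ≤ p i) {ε β : ℝ} (hε : ε ≤ p 0) (hβ : 0 ≤ β)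
    (h : C * (p 0 + p 1 + p 2) + D * p 3 ≤ lam - mu - β) : ε * β ≤ 𝔽 p 0 := by
  have : ε * β ≤ p 0 * (lam - mu - C * (p 0 + p 1 + p 2) - D * p 3) :=
    mul_le_mul hε (by linarith) hβ (hp 0)
  rw [hostVirusField_active]
  nlinarith [mul_nonneg hsig (hp 1), mul_nonneg hr (hp 2)]

/-- `n₁ᵢ + b n₂` grows exactly when the active hosts exceed `b μ₂ / ((1 - b) (1 - q) D)`; the
coexistence condition says that this threshold lies below `n̄₁ₐ`. -/
theorem hostVirusField_infected_add_mul_virus {b : ℝ} (hb : b * (m * v) = r + v) (p : Fin 4 → ℝ) :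
    𝔽 p 2 + b * 𝔽 p 3 = ((1 - b) * (1 - q) * D * p 0 - b * mu2) * p 3 := by
  rw [hostVirusField_infected, hostVirusField_virus]
  linear_combination p 2 * hb

theorem exists_dormant_le_of_virus_le (hD : 0 ≤ D) (hq0 : 0 ≤ q) (hkap : 0 ≤ kap) (hmu : 0 ≤ mu)
    (hsig : 0 < sig) (hn : ∀ t, 0 ≤ t → HasDerivAt n (𝔽 (n t)) t)
    (hpos : ∀ t, 0 ≤ t → ∀ i, 0 < n t i) {B : ℝ} (hbd : ∀ t, 0 ≤ t → ∀ i, n t i ≤ B)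
    {ε : ℝ} (hε : 0 < ε) :
    ∃ η > 0, ∃ L, 0 ≤ L ∧ ∀ s t, 0 ≤ s → s + L ≤ t → (∀ u ∈ Icc s t, n u 3 ≤ η) →
      n t 1 ≤ ε := by
  have hB : 0 ≤ B := (hpos 0 le_rfl 0).le.trans (hbd 0 le_rfl 0)
  obtain ⟨η, hη, hηε⟩ := exists_pos_mul_lt (half_pos (mul_pos hsig hε)) (q * D * B)
  have hc : 0 ≤ q * D * B * η := by positivity
  obtain ⟨L, hL, hsettle⟩ := exists_settling_time hsig hc B (half_pos hε)
  refine ⟨η, hη, L, hL, fun s t hs hst hw => ?_⟩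
  have hy := hsettle (f := fun u => n u 1) hst
    (fun u hu => hasDerivAt_pi.1 (hn u (hs.trans hu.1)) 1) (hbd s hs 1) fun u hu => by
      have hu0 := hs.trans hu.1
      have hxw : n u 0 * n u 3 ≤ B * η := mul_le_mul (hbd u hu0 0)
        (hw u (Ico_subset_Icc_self hu)) (hpos u hu0 3).le hB
      rw [hostVirusField_dormant]
      nlinarith [mul_le_mul_of_nonneg_left hxw (mul_nonneg hq0 hD),
        mul_nonneg (mul_nonneg hkap hmu) (hpos u hu0 1).le]
  have : q * D * B * η / sig < ε / 2 := by
    rw [div_lt_iff₀ hsig]; linarith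
  linarith

theorem exists_infection_le_of_active_host_le (hD : 0 ≤ D) (hq1 : q ≤ 1) (hr : 0 ≤ r)
    (hv : 0 < v) (hmu2 : 0 < mu2) (hm : 0 ≤ m) (hn : ∀ t, 0 ≤ t → HasDerivAt n (𝔽 (n t)) t)
    (hpos : ∀ t, 0 ≤ t → ∀ i, 0 < n t i) {B : ℝ} (hbd : ∀ t, 0 ≤ t → ∀ i, n t i ≤ B)
    {ε : ℝ} (hε : 0 < ε) :
    ∃ δ > 0, ∃ L, 0 ≤ L ∧ ∀ s t, 0 ≤ s → s + L ≤ t → (∀ u ∈ Icc s t, n u 0 ≤ δ) →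
      n t 2 ≤ ε ∧ n t 3 ≤ ε := by
  have hrv : 0 < r + v := by linarith
  -- `k n₁ᵢ + n₂` is a Lyapunov function for the infection as long as the active hosts are scarce.
  set k := m * v / (r + v) + 1
  have hk1 : 1 ≤ k := le_add_of_nonneg_left (by positivity)
  have hkrv : k * (r + v) = m * v + (r + v) := by
    rw [add_mul, div_mul_cancel₀ _ hrv.ne', one_mul]
  set α := min ((r + v) / k) (mu2 / 2)
  have hα : 0 < α := lt_min (by positivity) (half_pos hmu2)
  have hcoef : 0 ≤ (k - 1) * (1 - q) * D := by
    have := sub_nonneg.2 hq1; have := sub_nonneg.2 hk1; positivity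
  obtain ⟨δ, hδ, hδμ⟩ := exists_pos_mul_lt (half_pos hmu2) ((k - 1) * (1 - q) * D)
  obtain ⟨L, hL, hsettle⟩ := exists_settling_time hα le_rfl ((k + 1) * B) hε
  refine ⟨δ, hδ, L, hL, fun s t hs hst hx => ?_⟩
  have hu := hsettle (f := fun u => k * n u 2 + n u 3) hst
    (fun u hu => ((hasDerivAt_pi.1 (hn u (hs.trans hu.1)) 2).const_mul k).add
      (hasDerivAt_pi.1 (hn u (hs.trans hu.1)) 3))
    (by linarith [mul_le_mul_of_nonneg_left (hbd s hs 2) (zero_le_one.trans hk1), hbd s hs 3])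
    fun u hu => by
      have hu0 := hs.trans hu.1
      have hz := (hpos u hu0 2).le; have hw := (hpos u hu0 3).le
      have hx : (k - 1) * (1 - q) * D * n u 0 ≤ mu2 / 2 :=
        (mul_le_mul_of_nonneg_left (hx u (Ico_subset_Icc_self hu)) hcoef).trans hδμ.le
      have hαz : α * k ≤ r + v := (le_div_iff₀ (by linarith)).1 (min_le_left _ _)
      have hαw : α ≤ mu2 / 2 := min_le_right _ _
      have hid : k * 𝔽 (n u) 2 + 𝔽 (n u) 3 =
          -(r + v) * n u 2 + ((k - 1) * (1 - q) * D * n u 0 - mu2) * n u 3 := by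
        rw [hostVirusField_infected, hostVirusField_virus]; linear_combination (-n u 2) * hkrv
      rw [hid]
      nlinarith [mul_le_mul_of_nonneg_right hαz hz, mul_le_mul_of_nonneg_right hαw hw,
        mul_le_mul_of_nonneg_right hx hw]
  have ht : 0 ≤ t := by linarith
  have hz : n t 2 ≤ k * n t 2 := le_mul_of_one_le_left (hpos t ht 2).le hk1
  simp only [zero_div, zero_add] at hu
  exact ⟨by linarith [(hpos t ht 3).le], by linarith [(hpos t ht 2).le]⟩

theorem exists_window_active_host_deriv_nonneg (hlm : mu < lam) (hC : 0 ≤ C) (hD : 0 ≤ D)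
    (hq0 : 0 ≤ q) (hq1 : q ≤ 1) (hkap : 0 ≤ kap) (hmu : 0 ≤ mu) (hsig : 0 < sig) (hr : 0 ≤ r)
    (hv : 0 < v) (hmu2 : 0 < mu2) (hm : 0 ≤ m) (hn : ∀ t, 0 ≤ t → HasDerivAt n (𝔽 (n t)) t)
    (hpos : ∀ t, 0 ≤ t → ∀ i, 0 < n t i) {B : ℝ} (hbd : ∀ t, 0 ≤ t → ∀ i, n t i ≤ B) :
    ∃ δ > 0, ∃ L, 0 ≤ L ∧ ∀ s t, 0 ≤ s → s + L ≤ t → (∀ u ∈ Icc s t, n u 0 ≤ δ) →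
      0 ≤ 𝔽 (n t) 0 := by
  -- Each of `C n₁ₐ`, `C n₁d` and `C n₁ᵢ + D n₂` is kept below `(λ - μ) / 4`.
  have hE : 0 < (lam - mu) / 4 := by linarith
  obtain ⟨εy, hεy, hCεy⟩ := exists_pos_mul_lt hE C
  obtain ⟨η, hη, Ly, hLy, hdormant⟩ :=
    exists_dormant_le_of_virus_le hD hq0 hkap hmu hsig hn hpos hbd hεy
  obtain ⟨ε, hε, hCDε⟩ := exists_pos_mul_lt hE (C + D)
  obtain ⟨δ₁, hδ₁, L₁, hL₁, hinfection⟩ := exists_infection_le_of_active_host_le hD hq1 hr hv hmu2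
    hm hn hpos hbd (lt_min hη hε)
  obtain ⟨δ₂, hδ₂, hCδ₂⟩ := exists_pos_mul_lt hE C
  refine ⟨min δ₁ δ₂, lt_min hδ₁ hδ₂, L₁ + Ly, by positivity, fun s t hs hst hx => ?_⟩
  have hzw : ∀ u ∈ Icc (s + L₁) t, n u 2 ≤ min η ε ∧ n u 3 ≤ min η ε := fun u hu =>
    hinfection s u hs hu.1 fun w hw => (hx w ⟨hw.1, hw.2.trans hu.2⟩).trans (min_le_left _ _)
  have hy : n t 1 ≤ εy := hdormant (s + L₁) t (by linarith) (by linarith)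
    fun u hu => (hzw u hu).2.trans (min_le_left _ _)
  have ht : 0 ≤ t := by linarith
  have hxt : n t 0 ≤ δ₂ := (hx t ⟨by linarith, le_rfl⟩).trans (min_le_right _ _)
  obtain ⟨hzt, hwt⟩ := hzw t ⟨by linarith, le_rfl⟩
  have hzt := hzt.trans (min_le_right _ _); have hwt := hwt.trans (min_le_right _ _)
  have hsmall : C * (n t 0 + n t 1 + n t 2) + D * n t 3 ≤ lam - mu - 0 := by
    nlinarith [mul_le_mul_of_nonneg_left hxt hC, mul_le_mul_of_nonneg_left hy hC,
      mul_le_mul_of_nonneg_left hzt hC, mul_le_mul_of_nonneg_left hwt hD]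
  have : 0 * 0 ≤ 𝔽 (n t) 0 := mul_le_hostVirusField_active hsig.le hr
    (fun i => (hpos t ht i).le) (hpos t ht 0).le le_rfl hsmall
  simpa using this

theorem exists_active_host_lower_bound (hlm : mu < lam) (hC : 0 ≤ C) (hD : 0 ≤ D)
    (hq0 : 0 ≤ q) (hq1 : q ≤ 1) (hkap : 0 ≤ kap) (hmu : 0 ≤ mu) (hsig : 0 < sig) (hr : 0 ≤ r)
    (hv : 0 < v) (hmu2 : 0 < mu2) (hm : 0 ≤ m) (hn : ∀ t, 0 ≤ t → HasDerivAt n (𝔽 (n t)) t)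
    (hpos : ∀ t, 0 ≤ t → ∀ i, 0 < n t i) {B : ℝ} (hbd : ∀ t, 0 ≤ t → ∀ i, n t i ≤ B) :
    ∃ ε > 0, ∀ t, 0 ≤ t → ε ≤ n t 0 := by
  obtain ⟨K, hK, hlow⟩ :=
    exists_neg_mul_le_hostVirusField hlm.le hC hD hq0 hq1 hsig.le hr hv.le hm B
  obtain ⟨δ, hδ, L, hL, hrep⟩ := exists_window_active_host_deriv_nonneg hlm hC hD hq0 hq1 hkap hmu
    hsig hr hv hmu2 hm hn hpos hbd
  exact exists_pos_forall_le_of_delayed_repulsion hδ hK hL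
    (fun t ht => hasDerivAt_pi.1 (hn t ht) 0) (hpos 0 le_rfl 0)
    (fun t ht => hlow (n t) (fun i => (hpos t ht i).le) (hbd t ht) 0) hrep

theorem exists_virus_weight (hlm : mu ≤ lam) (hC : 0 ≤ C) (hD : 0 ≤ D) (hq1 : q ≤ 1) (hr : 0 ≤ r)
    (hv : 0 < v) (hmu2 : 0 < mu2)
    (hcoex : (m * v - (r + v)) * (1 - q) * D * ((lam - mu) / C) > mu2 * (r + v)) :
    ∃ b, 0 < b ∧ b * (m * v) = r + v ∧ b * mu2 < (1 - b) * (1 - q) * D * ((lam - mu) / C) := by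
  have hrv : 0 < r + v := by linarith
  have hmv : r + v < m * v := by
    by_contra! h
    have : 0 ≤ (1 - q) * D * ((lam - mu) / C) :=
      mul_nonneg (mul_nonneg (sub_nonneg.2 hq1) hD) (div_nonneg (sub_nonneg.2 hlm) hC)
    nlinarith [mul_pos hmu2 hrv]
  have hmv0 : 0 < m * v := hrv.trans hmv
  refine ⟨(r + v) / (m * v), div_pos hrv hmv0, div_mul_cancel₀ _ hmv0.ne', ?_⟩
  have hb : (r + v) / (m * v) * (m * v) = r + v := div_mul_cancel₀ _ hmv0.ne'
  rw [← mul_lt_mul_iff_of_pos_right hmv0]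
  calc (r + v) / (m * v) * mu2 * (m * v) = mu2 * (r + v) := by linear_combination mu2 * hb
    _ < (m * v - (r + v)) * (1 - q) * D * ((lam - mu) / C) := hcoex
    _ = (1 - (r + v) / (m * v)) * (1 - q) * D * ((lam - mu) / C) * (m * v) := by
      linear_combination (1 - q) * D * ((lam - mu) / C) * hb

theorem exists_window_virus_deriv_nonneg (hlm : mu < lam) (hC : 0 < C) (hD : 0 ≤ D)
    (hq0 : 0 ≤ q) (hkap : 0 ≤ kap) (hmu : 0 ≤ mu) (hsig : 0 < sig) (hr : 0 ≤ r) (hmu2 : 0 < mu2)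
    {b : ℝ} (hb : 0 < b) (hbmv : b * (m * v) = r + v)
    (hthreshold : b * mu2 < (1 - b) * (1 - q) * D * ((lam - mu) / C))
    (hn : ∀ t, 0 ≤ t → HasDerivAt n (𝔽 (n t)) t)
    (hpos : ∀ t, 0 ≤ t → ∀ i, 0 < n t i) {B : ℝ} (hbd : ∀ t, 0 ≤ t → ∀ i, n t i ≤ B)
    {ε₀ : ℝ} (hε₀ : 0 < ε₀) (hx : ∀ t, 0 ≤ t → ε₀ ≤ n t 0) :
    ∃ δ > 0, ∃ L, 0 ≤ L ∧ ∀ s t, 0 ≤ s → s + L ≤ t →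
      (∀ u ∈ Icc s t, n u 2 + b * n u 3 ≤ δ) → 0 ≤ 𝔽 (n t) 2 + b * 𝔽 (n t) 3 := by
  set nbar := (lam - mu) / C
  have hCnbar : C * nbar = lam - mu := mul_div_cancel₀ _ hC.ne'
  set a := (1 - b) * (1 - q) * D
  -- Above the level `x < n̄₁ₐ` the infection grows; while `n₁d`, `n₁ᵢ`, `n₂` are small the active
  -- hosts climb to `x` at the uniform rate `c`.
  obtain ⟨g, hg, hga⟩ := exists_pos_mul_lt (sub_pos.2 hthreshold) a
  set x := nbar - g
  have hx_threshold : b * mu2 < a * x := by simp only [x]; linarith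
  have ha : 0 < a := pos_of_mul_pos_left (hthreshold.trans' (by positivity))
    (div_pos (by linarith) hC).le
  have hx_pos : 0 < x := pos_of_mul_pos_right (hx_threshold.trans' (by positivity)) ha.le
  set c := ε₀ * (C * g / 2)
  have hc : 0 < c := by positivity
  obtain ⟨η, hη, Ly, hLy, hdormant⟩ :=
    exists_dormant_le_of_virus_le hD hq0 hkap hmu hsig hn hpos hbd (by positivity : 0 < g / 4)
  obtain ⟨δ, hδ, hCDδ⟩ := exists_pos_mul_lt (by positivity : 0 < C * g / 4) (C + D / b)
  refine ⟨min (b * η) δ, lt_min (mul_pos hb hη) hδ, Ly + x / c, by positivity,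
    fun s t hs hst hφ => ?_⟩
  have hzw : ∀ u ∈ Icc s t, n u 2 ≤ δ ∧ b * n u 3 ≤ min (b * η) δ := fun u hu => by
    have := hφ u hu; have := mul_pos hb (hpos u (hs.trans hu.1) 3); have := hpos u (hs.trans hu.1) 2
    exact ⟨by linarith [min_le_right (b * η) δ], by linarith⟩
  have hwη : ∀ u ∈ Icc s t, n u 3 ≤ η := fun u hu =>
    le_of_mul_le_mul_left ((hzw u hu).2.trans (min_le_left _ _)) hb
  have hCDzw : ∀ u ∈ Icc s t, C * n u 2 + D * n u 3 ≤ C * g / 4 := fun u hu => by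
    have hw : n u 3 ≤ δ / b := (le_div_iff₀' hb).2 ((hzw u hu).2.trans (min_le_right _ _))
    have : C * δ + D * (δ / b) = (C + D / b) * δ := by ring
    nlinarith [mul_le_mul_of_nonneg_left (hzw u hu).1 hC.le, mul_le_mul_of_nonneg_left hw hD]
  have hrecover : x ≤ n t 0 := by
    refine le_of_deriv_ge_while_le (a := s + Ly) hc.le (by linarith [div_nonneg hx_pos.le hc.le])
      (fun u hu => hasDerivAt_pi.1 (hn u (by linarith [hu.1])) 0) ?_ fun u hu hxu => ?_
    · have := hpos (s + Ly) (by linarith) 0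
      have : x ≤ c * (t - (s + Ly)) := by
        rw [← div_le_iff₀' hc]; linarith
      linarith
    · have hu0 : 0 ≤ u := by linarith [hu.1]
      have huw : u ∈ Icc s t := ⟨by linarith [hu.1], hu.2⟩
      have hy := hdormant s u hs hu.1 fun w hw => hwη w ⟨hw.1, hw.2.trans hu.2⟩
      refine mul_le_hostVirusField_active hsig.le hr (fun i => (hpos u hu0 i).le) (hx u hu0)
        (by positivity) ?_
      nlinarith [hCDzw u huw, mul_le_mul_of_nonneg_left hxu hC.le,
        mul_le_mul_of_nonneg_left hy hC.le]
  rw [hostVirusField_infected_add_mul_virus hbmv]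
  have ht : 0 ≤ t := by linarith [div_nonneg hx_pos.le hc.le]
  exact mul_nonneg (by nlinarith [mul_le_mul_of_nonneg_left hrecover ha.le]) (hpos t ht 3).le

theorem exists_virus_lower_bound (hlm : mu < lam) (hC : 0 < C) (hD : 0 ≤ D) (hq0 : 0 ≤ q)
    (hq1 : q ≤ 1) (hkap : 0 ≤ kap) (hmu : 0 ≤ mu) (hsig : 0 < sig) (hr : 0 ≤ r) (hv : 0 ≤ v)
    (hmu2 : 0 < mu2) (hm : 0 ≤ m) {b : ℝ} (hb : 0 < b) (hbmv : b * (m * v) = r + v)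
    (hthreshold : b * mu2 < (1 - b) * (1 - q) * D * ((lam - mu) / C))
    (hn : ∀ t, 0 ≤ t → HasDerivAt n (𝔽 (n t)) t)
    (hpos : ∀ t, 0 ≤ t → ∀ i, 0 < n t i) {B : ℝ} (hbd : ∀ t, 0 ≤ t → ∀ i, n t i ≤ B)
    {ε₀ : ℝ} (hε₀ : 0 < ε₀) (hx : ∀ t, 0 ≤ t → ε₀ ≤ n t 0) :
    ∃ c > 0, ∀ t, 0 ≤ t → c ≤ n t 2 + b * n t 3 := by
  obtain ⟨K, hK, hlow⟩ :=
    exists_neg_mul_le_hostVirusField hlm.le hC.le hD hq0 hq1 hsig.le hr hv hm B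
  obtain ⟨δ, hδ, L, hL, hrep⟩ := exists_window_virus_deriv_nonneg hlm hC hD hq0 hkap hmu hsig hr
    hmu2 hb hbmv hthreshold hn hpos hbd hε₀ hx
  refine exists_pos_forall_le_of_delayed_repulsion hδ hK hL
    (fun t ht => (hasDerivAt_pi.1 (hn t ht) 2).add ((hasDerivAt_pi.1 (hn t ht) 3).const_mul b))
    (add_pos (hpos 0 le_rfl 2) (mul_pos hb (hpos 0 le_rfl 3))) (fun t ht => ?_) hrep
  have hlow := hlow (n t) (fun i => (hpos t ht i).le) (hbd t ht)
  nlinarith [hlow 2, mul_le_mul_of_nonneg_left (hlow 3) hb.le]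

theorem eventually_infected_ge (hD : 0 < D) (hq1 : q < 1) (hr : 0 ≤ r) (hv : 0 ≤ v)
    (hn : ∀ t, 0 ≤ t → HasDerivAt n (𝔽 (n t)) t) (hpos : ∀ t, 0 ≤ t → ∀ i, 0 < n t i)
    {ε₀ : ℝ} (hε₀ : 0 < ε₀) (hx : ∀ t, 0 ≤ t → ε₀ ≤ n t 0)
    {b c : ℝ} (hb : 0 < b) (hc : 0 < c) (hφ : ∀ t, 0 ≤ t → c ≤ n t 2 + b * n t 3) :
    ∃ c' > 0, ∀ᶠ t in atTop, c' ≤ n t 2 := by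
  set γ := (1 - q) * D * ε₀ / b
  have hγ : 0 < γ := by have := sub_pos.2 hq1; positivity
  have hk : 0 < γ + (r + v) := by linarith
  refine ⟨_, div_pos (mul_pos hγ hc) (mul_pos two_pos hk),
    eventually_ge_of_sub_mul_le_deriv (f' := fun t => 𝔽 (n t) 2) hk (mul_pos hγ hc) ?_ ?_ ?_⟩ <;>
    filter_upwards [eventually_ge_atTop 0] with t ht
  · exact hasDerivAt_pi.1 (hn t ht) 2
  · exact (hpos t ht 2).le
  -- `b n₂ ≥ c - n₁ᵢ` turns the infection term into a linear lower bound.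
  have hinf : γ * (c - n t 2) ≤ (1 - q) * D * n t 0 * n t 3 := calc
    γ * (c - n t 2) ≤ γ * (b * n t 3) := mul_le_mul_of_nonneg_left (by linarith [hφ t ht]) hγ.le
    _ = (1 - q) * D * ε₀ * n t 3 := by simp only [γ]; field_simp
    _ ≤ (1 - q) * D * n t 0 * n t 3 := by
      have := sub_pos.2 hq1
      gcongr
      · exact (hpos t ht 3).le
      · exact hx t ht
  rw [hostVirusField_infected]
  linarith

theorem eventually_virus_ge (hD : 0 ≤ D) (hq1 : q ≤ 1) (hv : 0 < v) (hmu2 : 0 < mu2) (hm : 0 < m)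
    (hn : ∀ t, 0 ≤ t → HasDerivAt n (𝔽 (n t)) t) (hpos : ∀ t, 0 ≤ t → ∀ i, 0 < n t i)
    {B : ℝ} (hbd : ∀ t, 0 ≤ t → ∀ i, n t i ≤ B) {c : ℝ} (hc : 0 < c)
    (hz : ∀ᶠ t in atTop, c ≤ n t 2) :
    ∃ c' > 0, ∀ᶠ t in atTop, c' ≤ n t 3 := by
  have hB : 0 ≤ B := (hpos 0 le_rfl 0).le.trans (hbd 0 le_rfl 0)
  have hk : 0 < (1 - q) * D * B + mu2 := by have := sub_nonneg.2 hq1; positivity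
  have hα : 0 < m * v * c := by positivity
  refine ⟨_, div_pos hα (mul_pos two_pos hk),
    eventually_ge_of_sub_mul_le_deriv (f' := fun t => 𝔽 (n t) 3) hk hα ?_ ?_ ?_⟩ <;>
    filter_upwards [eventually_ge_atTop 0, hz] with t ht hzt
  · exact hasDerivAt_pi.1 (hn t ht) 3
  · exact (hpos t ht 3).le
  have hxB : (1 - q) * D * n t 0 ≤ (1 - q) * D * B :=
    mul_le_mul_of_nonneg_left (hbd t ht 0) (mul_nonneg (sub_nonneg.2 hq1) hD)
  rw [hostVirusField_virus]
  nlinarith [mul_le_mul_of_nonneg_right hxB (hpos t ht 3).le,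
    mul_le_mul_of_nonneg_left hzt (mul_pos hm hv).le]

theorem eventually_dormant_ge (hD : 0 < D) (hq0 : 0 < q) (hkap : 0 ≤ kap) (hmu : 0 ≤ mu)
    (hsig : 0 < sig) (hn : ∀ t, 0 ≤ t → HasDerivAt n (𝔽 (n t)) t)
    (hpos : ∀ t, 0 ≤ t → ∀ i, 0 < n t i) {ε₀ : ℝ} (hε₀ : 0 < ε₀) (hx : ∀ t, 0 ≤ t → ε₀ ≤ n t 0)
    {c : ℝ} (hc : 0 < c) (hw : ∀ᶠ t in atTop, c ≤ n t 3) :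
    ∃ c' > 0, ∀ᶠ t in atTop, c' ≤ n t 1 := by
  have hk : 0 < kap * mu + sig := by positivity
  have hα : 0 < q * D * ε₀ * c := by positivity
  refine ⟨_, div_pos hα (mul_pos two_pos hk),
    eventually_ge_of_sub_mul_le_deriv (f' := fun t => 𝔽 (n t) 1) hk hα ?_ ?_ ?_⟩ <;>
    filter_upwards [eventually_ge_atTop 0, hw] with t ht hwt
  · exact hasDerivAt_pi.1 (hn t ht) 1
  · exact (hpos t ht 1).le
  have : q * D * ε₀ * c ≤ q * D * n t 0 * n t 3 := by
    have := hx t ht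
    gcongr
    exact (mul_pos (mul_pos hq0 hD) (hpos t ht 0)).le
  rw [hostVirusField_dormant]
  linarith

end HostVirus

open HostVirus

theorem uniform_strong_persistence
    (lam mu C D q kap sig r v mu2 m : ℝ)
    (hmu : 0 < mu) (hlm : mu < lam) (hC : 0 < C) (hD : 0 < D)
    (hq0 : 0 < q) (hq1 : q < 1) (hkap : 0 ≤ kap) (hsig : 0 < sig)
    (hr : 0 < r) (hv : 0 < v) (hmu2 : 0 < mu2) (hm : 0 < m)
    (hcoex : (m * v - (r + v)) * (1 - q) * D * ((lam - mu) / C) > mu2 * (r + v))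
    (n : ℝ → (Fin 4 → ℝ))
    (hderiv : ∀ t : ℝ, 0 ≤ t → HasDerivAt n (hostVirusField lam mu C D q kap sig r v mu2 m (n t)) t)
    (hinit : ∀ i, 0 < n 0 i) :
    ∀ j : Fin 4, 0 < Filter.liminf (fun t : ℝ => n t j) atTop := by
  have hpos := solution_pos hlm.le hC.le hD.le hq0.le hq1.le hsig.le hr.le hv.le hm.le hderiv hinit
  obtain ⟨B, hbd⟩ := exists_solution_bound hC hD.le hq1.le hkap hmu.le hv.le hmu2 hm.le hderiv hpos
  obtain ⟨ε₀, hε₀, hx⟩ := exists_active_host_lower_bound hlm hC.le hD.le hq0.le hq1.le hkap hmu.le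
    hsig hr.le hv hmu2 hm.le hderiv hpos hbd
  obtain ⟨b, hb, hbmv, hthreshold⟩ :=
    exists_virus_weight hlm.le hC.le hD.le hq1.le hr.le hv hmu2 hcoex
  obtain ⟨cφ, hcφ, hφ⟩ := exists_virus_lower_bound hlm hC hD.le hq0.le hq1.le hkap hmu.le hsig
    hr.le hv.le hmu2 hm.le hb hbmv hthreshold hderiv hpos hbd hε₀ hx
  obtain ⟨cz, hcz, hz⟩ := eventually_infected_ge hD hq1 hr.le hv.le hderiv hpos hε₀ hx hb hcφ hφ
  obtain ⟨cw, hcw, hw⟩ := eventually_virus_ge hD.le hq1.le hv hmu2 hm hderiv hpos hbd hcz hz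
  obtain ⟨cy, hcy, hy⟩ := eventually_dormant_ge hD hq0 hkap hmu.le hsig hderiv hpos hε₀ hx hcw hw
  have hbdd : ∀ j, ∀ᶠ t in atTop, n t j ≤ B := fun j =>
    eventually_atTop.2 ⟨0, fun t ht => hbd t ht j⟩
  intro j
  fin_cases j
  · exact liminf_pos_of_eventually_ge hε₀ (hbdd 0) (eventually_atTop.2 ⟨0, hx⟩)
  · exact liminf_pos_of_eventually_ge hcy (hbdd 1) hy
  · exact liminf_pos_of_eventually_ge hcz (hbdd 2) hz
  · exact liminf_pos_of_eventually_ge hcw (hbdd 3) hw
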